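/- Let D : H → ℓ²(ℕ) be an isometry with ‖DD*‖_{ℓ¹→ℓ¹} < ∞ (equivalently sup_j Σ_k |⟨D*e_j, D*e_k⟩| < ∞). Then the operator DD* maps c₀(ℕ) into c₀(ℕ): for every z ∈ c₀(ℕ), the sequence DD*z tends to zero. -/

import Mathlib

noncomputable abbrev ℓ2 := lp (fun _ : ℕ => ℂ) 2

/-!
Write `a k j = ⟪D*e_k, D*e_j⟫ = (DD*e_j)_k`. Each column `k ↦ a k j` is the coordinate sequence of
a vector of `ℓ²`, hence tends to `0`, and the rows are bounded in `ℓ¹` by `B`. Splitting `z` into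
its first `N` terms and a tail of sup norm `δ`, the head contributes a finite combination of
columns, which tends to `0`, and the tail contributes at most `B δ`.
-/

open Filter Topology Finset

theorem lp.tendsto_norm_cofinite_zero {α : Type*} {E : α → Type*}
    [∀ i, NormedAddCommGroup (E i)] {p : ENNReal} (hp : 0 < p.toReal) (f : lp E p) :
    Tendsto (fun i => ‖f i‖) cofinite (𝓝 0) := by
  have hpow := ((lp.memℓp f).summable hp).tendsto_cofinite_zero
  have hroot := (Real.continuousAt_rpow_const 0 p.toReal⁻¹ (Or.inr (by positivity))).tendsto
  simpa [Function.comp_def, Real.rpow_rpow_inv (norm_nonneg _) hp.ne', hp.ne'] using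
    hroot.comp hpow

theorem tendsto_inner_adjoint_single_left {𝕜 H : Type*} [RCLike 𝕜] [NormedAddCommGroup H]
    [InnerProductSpace 𝕜 H] [CompleteSpace H] (T : H →L[𝕜] lp (fun _ : ℕ => 𝕜) 2) (v : H) :
    Tendsto (fun k => inner 𝕜 (T.adjoint (lp.single 2 k 1)) v) atTop (𝓝 0) := by
  simp_rw [ContinuousLinearMap.adjoint_inner_left, lp.inner_single_left, RCLike.inner_apply,
    map_one, mul_one]
  rw [← Nat.cofinite_eq_atTop]
  exact tendsto_zero_iff_norm_tendsto_zero.2 (lp.tendsto_norm_cofinite_zero (by simp) (T v))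

section BoundedRows

variable {ι R : Type*} [NormedRing R] {a z : ι → R} {C : ℝ}

theorem summable_mul_of_norm_le [CompleteSpace R] (ha : Summable fun j => ‖a j‖)
    (hz : ∀ j, ‖z j‖ ≤ C) : Summable fun j => a j * z j :=
  (ha.mul_right C).of_norm_bounded fun j =>
    (norm_mul_le _ _).trans (mul_le_mul_of_nonneg_left (hz j) (norm_nonneg _))

theorem norm_tsum_mul_le_of_norm_le (ha : Summable fun j => ‖a j‖) (hz : ∀ j, ‖z j‖ ≤ C) :
    ‖∑' j, a j * z j‖ ≤ (∑' j, ‖a j‖) * C :=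
  tsum_of_norm_bounded (ha.hasSum.mul_right C) fun j =>
    (norm_mul_le _ _).trans (mul_le_mul_of_nonneg_left (hz j) (norm_nonneg _))

end BoundedRows

theorem tendsto_tsum_mul_of_bounded_rows {R : Type*} [NormedRing R] [CompleteSpace R]
    {a : ℕ → ℕ → R} {z : ℕ → R} {B : ℝ} (hrow : ∀ k, Summable fun j => ‖a k j‖)
    (hB : ∀ k, ∑' j, ‖a k j‖ ≤ B) (hcol : ∀ j, Tendsto (fun k => a k j) atTop (𝓝 0))
    (hz : Tendsto z atTop (𝓝 0)) :
    Tendsto (fun k => ∑' j, a k j * z j) atTop (𝓝 0) := by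
  obtain ⟨C, hC⟩ := hz.norm.bddAbove_range
  refine NormedAddGroup.tendsto_nhds_zero.2 fun ε hε => ?_
  obtain ⟨δ, hδ, hBδ⟩ := exists_pos_mul_lt (half_pos hε) B
  obtain ⟨N, hN⟩ := eventually_atTop.1 (hz.norm.eventually_le_const (by simpa using hδ))
  have hhead : Tendsto (fun k => ∑ j ∈ range N, a k j * z j) atTop (𝓝 0) := by
    simpa using tendsto_finsetSum (range N) fun j _ => (hcol j).mul_const (z j)
  filter_upwards [NormedAddGroup.tendsto_nhds_zero.1 hhead _ (half_pos hε)] with k hk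
  have htail : ‖∑' j, a k (j + N) * z (j + N)‖ ≤ B * δ := calc
    _ ≤ (∑' j, ‖a k (j + N)‖) * δ := norm_tsum_mul_le_of_norm_le
        ((summable_nat_add_iff N).2 (hrow k)) fun j => hN _ (Nat.le_add_left N j)
    _ ≤ B * δ := by
      gcongr
      exact (tsum_comp_le_tsum_of_inj (hrow k) (fun _ => norm_nonneg _)
        (add_left_injective N)).trans (hB k)
  rw [← (summable_mul_of_norm_le (hrow k) fun j => hC ⟨j, rfl⟩).sum_add_tsum_nat_add N]
  calc _ ≤ _ + _ := norm_add_le _ _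
    _ < ε / 2 + ε / 2 := add_lt_add_of_lt_of_le hk (htail.trans hBδ.le)
    _ = ε := add_halves ε

theorem stmt_10_general {H : Type*} [NormedAddCommGroup H] [InnerProductSpace ℂ H] [CompleteSpace H]
    (D : H →L[ℂ] ℓ2) (B : ℝ)
    (hrow : ∀ j : ℕ, Summable fun k : ℕ =>
      ‖(inner ℂ (ContinuousLinearMap.adjoint D (lp.single 2 j (1 : ℂ)))
        (ContinuousLinearMap.adjoint D (lp.single 2 k (1 : ℂ))) : ℂ)‖)
    (hB : ∀ j : ℕ, (∑' k : ℕ,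
      ‖(inner ℂ (ContinuousLinearMap.adjoint D (lp.single 2 j (1 : ℂ)))
        (ContinuousLinearMap.adjoint D (lp.single 2 k (1 : ℂ))) : ℂ)‖) ≤ B)
    (z : ℕ → ℂ) (hz : Filter.Tendsto z Filter.atTop (nhds 0)) :
    Filter.Tendsto
      (fun k : ℕ => ∑' j : ℕ,
        (inner ℂ (ContinuousLinearMap.adjoint D (lp.single 2 k (1 : ℂ)))
          (ContinuousLinearMap.adjoint D (lp.single 2 j (1 : ℂ))) : ℂ) * z j)
      Filter.atTop (nhds 0) :=
  tendsto_tsum_mul_of_bounded_rows hrow hB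
    (fun _ => tendsto_inner_adjoint_single_left D _) hz

/-- If `D : H → ℓ²` is an isometry with `sup_j Σ_k |⟨D*e_j, D*e_k⟩| ≤ B < ∞`,
then `DD*` maps `c₀(ℕ)` to `c₀(ℕ)`: for every sequence `z` converging to `0`,
the sequence `k ↦ (DD*z)_k = Σ_j ⟨D*e_k, D*e_j⟩ z_j` converges to `0`. -/
theorem stmt_10 {H : Type*} [NormedAddCommGroup H] [InnerProductSpace ℂ H] [CompleteSpace H]
    (D : H →L[ℂ] ℓ2) (hD : ∀ f : H, ‖D f‖ = ‖f‖) (B : ℝ)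
    (hrow : ∀ j : ℕ, Summable fun k : ℕ =>
      ‖(inner ℂ (ContinuousLinearMap.adjoint D (lp.single 2 j (1 : ℂ)))
        (ContinuousLinearMap.adjoint D (lp.single 2 k (1 : ℂ))) : ℂ)‖)
    (hB : ∀ j : ℕ, (∑' k : ℕ,
      ‖(inner ℂ (ContinuousLinearMap.adjoint D (lp.single 2 j (1 : ℂ)))
        (ContinuousLinearMap.adjoint D (lp.single 2 k (1 : ℂ))) : ℂ)‖) ≤ B)
    (z : ℕ → ℂ) (hz : Filter.Tendsto z Filter.atTop (nhds 0)) :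
    Filter.Tendsto
      (fun k : ℕ => ∑' j : ℕ,
        (inner ℂ (ContinuousLinearMap.adjoint D (lp.single 2 k (1 : ℂ)))
          (ContinuousLinearMap.adjoint D (lp.single 2 j (1 : ℂ))) : ℂ) * z j)
      Filter.atTop (nhds 0) :=
  stmt_10_general D B hrow hB z hz
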